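/- arXiv:1502.01084 — 9 statements merged into one kernel-verified Lean document; each statement's English description precedes it below -/
import Mathlib

section
/- Let N ≥ 2 be an integer and let p ∈ (0,1) with p ≠ 1/2. Then the equation in the real variable k, f(N,k,p) = f(N,k,1/2) (equivalently f(N,k,p) = 2·(1/2)^N), has exactly two solutions in the interval [0,N]; that is, there exist real numbers x₁, x₂ with 0 < x₁ < x₂ < N such that for every k ∈ [0,N], f(N,k,p) = 2·(1/2)^N if and only if k = x₁ or k = x₂. -/
/-- `f N k p = p^k (1-p)^(N-k) + p^(N-k) (1-p)^k` with real-exponent powers. -/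
noncomputable def f (N : ℕ) (k p : ℝ) : ℝ :=
  p ^ k * (1 - p) ^ ((N : ℝ) - k) + p ^ ((N : ℝ) - k) * (1 - p) ^ k


private lemma exp_add_exp_neg_mono {x y : ℝ} (hx : 0 ≤ x) (hxy : x ≤ y) :
    Real.exp x + Real.exp (-x) ≤ Real.exp y + Real.exp (-y) := by
  rw [Real.exp_neg, Real.exp_neg]
  have h1 : 1 ≤ Real.exp x := by
    calc (1:ℝ) = Real.exp 0 := Real.exp_zero.symm
    _ ≤ Real.exp x := Real.exp_le_exp.2 hx
  have h2 : Real.exp x ≤ Real.exp y := Real.exp_le_exp.2 hxy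
  have hu : 0 < Real.exp x := Real.exp_pos x
  have hv : 0 < Real.exp y := Real.exp_pos y
  have key : 0 ≤ (Real.exp y - Real.exp x) * (Real.exp x * Real.exp y - 1) :=
    mul_nonneg (by linarith) (by nlinarith)
  have e1 : Real.exp x * (Real.exp x)⁻¹ = 1 := mul_inv_cancel₀ hu.ne'
  have e2 : Real.exp y * (Real.exp y)⁻¹ = 1 := mul_inv_cancel₀ hv.ne'
  nlinarith [key, mul_pos hu hv, e1, e2, inv_pos.2 hu, inv_pos.2 hv,
    mul_pos (inv_pos.2 hu) (inv_pos.2 hv)]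

private lemma pow_ineq {p : ℝ} (hp0 : 0 < p) (hp1 : p < 1) (hp : p ≠ 1/2) :
    ∀ n : ℕ, 2 ≤ n → 2 * (1/2:ℝ)^n < p^n + (1-p)^n := by
  intro n hn
  have hq0 : (0:ℝ) < 1 - p := by linarith
  induction n, hn using Nat.le_induction with
  | base =>
    have hne : p - 1/2 ≠ 0 := sub_ne_zero.2 hp
    have : 0 < (p - 1/2)^2 := by positivity
    nlinarith
  | succ n hn ih =>
    have cheb : 0 ≤ (p - (1-p)) * (p^n - (1-p)^n) := by
      rcases le_total (1-p) p with h | h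
      · exact mul_nonneg (by linarith) (sub_nonneg.2 (pow_le_pow_left₀ hq0.le h n))
      · have := mul_nonneg (by linarith : (0:ℝ) ≤ (1-p)-p)
          (sub_nonneg.2 (pow_le_pow_left₀ hp0.le h n))
        nlinarith
    have e1 : (1/2:ℝ)^(n+1) = (1/2) * (1/2)^n := by ring
    have e2 : p^(n+1) = p * p^n := by ring
    have e3 : (1-p)^(n+1) = (1-p) * (1-p)^n := by ring
    nlinarith [cheb, ih]

/-- For an integer `N ≥ 2` and `p ∈ (0,1)` with `p ≠ 1/2`, the equation
`f N k p = 2 (1/2)^N` has exactly two solutions `k` in `[0, N]`. -/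
theorem two_roots (N : ℕ) (hN : 2 ≤ N) (p : ℝ) (hp0 : 0 < p) (hp1 : p < 1)
    (hp : p ≠ 1 / 2) :
    ∃ x₁ x₂ : ℝ, 0 < x₁ ∧ x₁ < x₂ ∧ x₂ < N ∧
      ∀ k ∈ Set.Icc (0 : ℝ) (N : ℝ),
        (f N k p = 2 * (1 / 2 : ℝ) ^ N ↔ k = x₁ ∨ k = x₂) := by
  have hq0 : (0:ℝ) < 1 - p := by linarith
  have hpq : p ≠ 1 - p := fun h => hp (by linarith)
  have hNpos : (0:ℝ) < (N:ℝ) := by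
    have : 0 < N := by omega
    exact_mod_cast this
  set M : ℝ := (N:ℝ)/2 with hM
  have hM0 : 0 < M := by rw [hM]; linarith
  set d : ℝ := Real.log p - Real.log (1-p) with hd
  have hd0 : d ≠ 0 := by
    rw [hd, sub_ne_zero]
    intro h
    exact hpq (Real.log_injOn_pos (Set.mem_Ioi.2 hp0) (Set.mem_Ioi.2 hq0) h)
  set E : ℝ := Real.exp (M * (Real.log p + Real.log (1-p))) with hE
  have hE0 : 0 < E := Real.exp_pos _
  -- structure lemma
  have hstruct : ∀ k : ℝ, f N k p =
      E * (Real.exp ((k - M)*d) + Real.exp (-((k - M)*d))) := by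
    intro k
    rw [f, Real.rpow_def_of_pos hp0, Real.rpow_def_of_pos hp0,
        Real.rpow_def_of_pos hq0, Real.rpow_def_of_pos hq0,
        ← Real.exp_add, ← Real.exp_add, hE, mul_add,
        ← Real.exp_add, ← Real.exp_add]
    have h1 : Real.log p * k + Real.log (1-p) * ((N:ℝ) - k)
        = M * (Real.log p + Real.log (1-p)) + (k - M)*d := by
      rw [hM, hd]; ring
    have h2 : Real.log p * ((N:ℝ) - k) + Real.log (1-p) * k
        = M * (Real.log p + Real.log (1-p)) + -((k - M)*d) := by
      rw [hM, hd]; ring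
    rw [h1, h2]
  set c : ℝ := 2 * (1/2:ℝ)^N with hc
  set C : ℝ := Real.exp (M * (Real.log (1/4) - Real.log (p*(1-p)))) with hCdef
  have h14 : p * (1-p) < 1/4 := by nlinarith [sq_pos_of_ne_zero (sub_ne_zero.2 hp)]
  have hC1 : 1 < C := by
    rw [hCdef]
    exact Real.one_lt_exp_iff.2
      (mul_pos hM0 (sub_pos.2 (Real.log_lt_log (by positivity) h14)))
  have hlog4 : Real.log (1/4:ℝ) = 2 * Real.log (1/2) := by
    rw [show (1/4:ℝ) = (1/2)^2 by norm_num, Real.log_pow]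
    push_cast; ring
  have hhalf : (1/2:ℝ)^N = Real.exp (Real.log (1/2) * (N:ℝ)) := by
    rw [← Real.rpow_natCast (1/2:ℝ) N, Real.rpow_def_of_pos (by norm_num)]
  have hcC : c = 2 * E * C := by
    rw [hc, hE, hCdef, mul_assoc, ← Real.exp_add]
    congr 1
    rw [hhalf]
    congr 1
    rw [Real.log_mul hp0.ne' hq0.ne', hlog4, hM]
    ring
  set r : ℝ := C + Real.sqrt (C^2 - 1) with hrdef
  have hCsq : (0:ℝ) ≤ C^2 - 1 := by nlinarith
  have hsq := Real.sq_sqrt hCsq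
  have hsqnn := Real.sqrt_nonneg (C^2 - 1)
  have hr1 : 1 < r := by rw [hrdef]; linarith
  have hr0 : 0 < r := by linarith
  have hrinv : r⁻¹ = C - Real.sqrt (C^2 - 1) := by
    refine inv_eq_of_mul_eq_one_right ?_
    rw [hrdef]; linear_combination -hsq
  set L : ℝ := Real.log r with hL
  have hL0 : 0 < L := Real.log_pos hr1
  have hexpL : Real.exp L = r := Real.exp_log hr0
  have hquad : ∀ y : ℝ, 0 < y → (y + y⁻¹ = 2*C ↔ y = r ∨ y = r⁻¹) := by
    intro y hy
    constructor
    · intro h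
      have h2 : (y + y⁻¹) * y = 2*C*y := by rw [h]
      rw [add_mul, inv_mul_cancel₀ hy.ne', ← sq] at h2
      have h3 : (y - r) * (y - r⁻¹) = 0 := by
        rw [hrinv, hrdef]
        linear_combination h2 - hsq
      rcases mul_eq_zero.1 h3 with h | h
      · exact Or.inl (by linarith [sub_eq_zero.1 h])
      · exact Or.inr (by linarith [sub_eq_zero.1 h])
    · rintro (rfl | rfl)
      · rw [hrinv, hrdef]; ring
      · rw [inv_inv, hrinv, hrdef]; ring
  have key : ∀ k : ℝ, (f N k p = c ↔ ((k - M)*d = L ∨ (k - M)*d = -L)) := by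
    intro k
    rw [hstruct k, hcC, show (2:ℝ)*E*C = E*(2*C) by ring,
      mul_right_inj' hE0.ne', Real.exp_neg,
      hquad _ (Real.exp_pos _), ← hexpL, ← Real.exp_neg,
      Real.exp_eq_exp, Real.exp_eq_exp]
  have hdabs : 0 < |d| := abs_pos.2 hd0
  set t : ℝ := L / |d| with ht
  have ht0 : 0 < t := div_pos hL0 hdabs
  have hdt : L = t * |d| := (div_mul_cancel₀ L hdabs.ne').symm
  -- f at 0 exceeds c
  have hfval : f N 0 p = (1-p)^N + p^N := by
    rw [f, Real.rpow_zero, Real.rpow_zero, sub_zero, one_mul, mul_one,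
      Real.rpow_natCast, Real.rpow_natCast]
  have hgt : c < f N 0 p := by
    rw [hfval, hc]
    have := pow_ineq hp0 hp1 hp N hN
    linarith
  have habs0 : Real.exp ((0 - M)*d) + Real.exp (-((0 - M)*d))
      = Real.exp (M*|d|) + Real.exp (-(M*|d|)) := by
    rcases abs_cases d with ⟨h1, _⟩ | ⟨h1, _⟩
    · rw [h1, show (0 - M)*d = -(M*d) by ring, neg_neg, add_comm]
    · rw [h1, show (0 - M)*d = M*(-d) by ring]
  have hex : 2*C < Real.exp (M*|d|) + Real.exp (-(M*|d|)) := by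
    have h0 := hstruct 0
    rw [habs0] at h0
    rw [hcC, h0, show (2:ℝ)*E*C = E*(2*C) by ring] at hgt
    exact (mul_lt_mul_iff_right₀ hE0).1 hgt
  have hLM : L < M * |d| := by
    by_contra hcon
    push_neg at hcon
    have hmono := exp_add_exp_neg_mono (mul_nonneg hM0.le (abs_nonneg d)) hcon
    have h2C : Real.exp L + Real.exp (-L) = 2*C := by
      rw [hexpL, Real.exp_neg, hexpL, hrinv, hrdef]; ring
    linarith
  have htM : t < M := by
    rw [ht, div_lt_iff₀ hdabs]
    exact hLM
  have hsol : ∀ k : ℝ, (((k - M)*d = L ∨ (k - M)*d = -L) ↔ (k = M - t ∨ k = M + t)) := by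
    intro k
    rcases hd0.lt_or_gt with hneg | hpos
    · rw [abs_of_neg hneg] at hdt
      constructor
      · rintro (h | h)
        · left
          have e : (k - M) * d = (M - t - M) * d := by rw [h, hdt]; ring
          have := mul_right_cancel₀ hd0 e
          linarith
        · right
          have e : (k - M) * d = (M + t - M) * d := by rw [h, hdt]; ring
          have := mul_right_cancel₀ hd0 e
          linarith
      · rintro (rfl | rfl)
        · left; rw [hdt]; ring
        · right; rw [hdt]; ring
    · rw [abs_of_pos hpos] at hdt
      constructor
      · rintro (h | h)
        · right
          have e : (k - M) * d = (M + t - M) * d := by rw [h, hdt]; ring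
          have := mul_right_cancel₀ hd0 e
          linarith
        · left
          have e : (k - M) * d = (M - t - M) * d := by rw [h, hdt]; ring
          have := mul_right_cancel₀ hd0 e
          linarith
      · rintro (rfl | rfl)
        · right; rw [hdt]; ring
        · left; rw [hdt]; ring
  have hNM : (N:ℝ) = 2*M := by rw [hM]; ring
  refine ⟨M - t, M + t, by linarith, by linarith, by rw [hNM]; linarith, ?_⟩
  intro k _
  exact (key k).trans (hsol k)
end

section
/- Let N ≥ 2 be an integer and let p ∈ (0,1) with p ≠ 1/2, and let x₁ < x₂ be the two solutions in (0,N) of the equation f(N,k,p) = 2·(1/2)^N in the real variable k. Then x₁ + x₂ = N, and for every k ∈ [0,N] one has f(N,k,p) < 2·(1/2)^N if and only if x₁ < k < x₂ (and f(N,k,p) > 2·(1/2)^N if and only if k ∈ [0,x₁) ∪ (x₂,N]). -/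
/-- Let `N ≥ 2`, `p ∈ (0,1)` with `p ≠ 1/2`, and let `x₁ < x₂` be the two solutions
in `(0, N)` of `f N k p = 2 (1/2)^N`.  Then `x₁ + x₂ = N`, and for every `k ∈ [0, N]`,
`f N k p < 2 (1/2)^N` iff `x₁ < k < x₂`, and `f N k p > 2 (1/2)^N` iff
`k ∈ [0, x₁) ∪ (x₂, N]`. -/
theorem roots_properties (N : ℕ) (hN : 2 ≤ N) (p : ℝ) (hp0 : 0 < p) (hp1 : p < 1)
    (hp : p ≠ 1 / 2) (x₁ x₂ : ℝ) (hx₁ : 0 < x₁) (hx : x₁ < x₂) (hx₂ : x₂ < N)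
    (hroots : ∀ k ∈ Set.Icc (0 : ℝ) (N : ℝ),
      (f N k p = 2 * (1 / 2 : ℝ) ^ N ↔ k = x₁ ∨ k = x₂)) :
    x₁ + x₂ = N ∧
      ∀ k ∈ Set.Icc (0 : ℝ) (N : ℝ),
        (f N k p < 2 * (1 / 2 : ℝ) ^ N ↔ x₁ < k ∧ k < x₂) ∧
        (f N k p > 2 * (1 / 2 : ℝ) ^ N ↔ k < x₁ ∨ x₂ < k) := by
  set c : ℝ := 2 * (1 / 2 : ℝ) ^ N with hc
  have h1p : 0 < 1 - p := by linarith
  have hNR : (2 : ℝ) ≤ (N : ℝ) := by exact_mod_cast hN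
  -- continuity of f in k
  have hcont : Continuous fun k : ℝ => f N k p := by
    have e1 : (fun k : ℝ => p ^ k) = fun k => Real.exp (Real.log p * k) := by
      funext k; rw [Real.rpow_def_of_pos hp0]
    have e2 : (fun k : ℝ => (1 - p) ^ k) = fun k => Real.exp (Real.log (1 - p) * k) := by
      funext k; rw [Real.rpow_def_of_pos h1p]
    have c1 : Continuous fun k : ℝ => p ^ k := by rw [e1]; fun_prop
    have c2 : Continuous fun k : ℝ => (1 - p) ^ k := by rw [e2]; fun_prop
    have csub : Continuous fun k : ℝ => (N : ℝ) - k := by fun_prop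
    exact ((c1.mul (c2.comp csub)).add ((c1.comp csub).mul c2))
  -- symmetry
  have fsymm : ∀ k : ℝ, f N ((N : ℝ) - k) p = f N k p := by
    intro k
    simp only [f, sub_sub_cancel]
    ring
  -- value at 0
  have hf0 : c < f N 0 p := by
    have hconv := (strictConvexOn_pow hN).2 (Set.mem_Ici.2 hp0.le) (Set.mem_Ici.2 h1p.le)
      (by intro h; apply hp; linarith) (by norm_num : (0:ℝ) < 1/2) (by norm_num : (0:ℝ) < 1/2)
      (by norm_num)
    simp only [smul_eq_mul] at hconv
    have h1 : (1/2 : ℝ) * p + (1/2) * (1 - p) = 1/2 := by ring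
    rw [h1] at hconv
    have : f N 0 p = (1 - p) ^ N + p ^ N := by
      simp [f, Real.rpow_zero, Real.rpow_natCast]
    rw [this, hc]
    nlinarith [hconv]
  -- value at N/2
  have hfmid : f N ((N : ℝ) / 2) p < c := by
    have hsub : (N : ℝ) - (N : ℝ) / 2 = (N : ℝ) / 2 := by ring
    have : f N ((N : ℝ) / 2) p = 2 * (p * (1 - p)) ^ ((N : ℝ) / 2) := by
      simp only [f, hsub, Real.mul_rpow hp0.le h1p.le]
      ring
    rw [this]
    have hlt : (p * (1 - p)) ^ ((N : ℝ) / 2) < (1/4 : ℝ) ^ ((N : ℝ) / 2) := by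
      apply Real.rpow_lt_rpow (by positivity)
      · have h0 : 0 < (p - 1/2)^2 := lt_of_le_of_ne (sq_nonneg _)
          (Ne.symm (pow_ne_zero 2 (by intro h; apply hp; linarith)))
        nlinarith [h0]
      · linarith
    have h14 : (1/4 : ℝ) ^ ((N : ℝ) / 2) = (1/2 : ℝ) ^ N := by
      have : (1/4 : ℝ) = (1/2 : ℝ) ^ (2 : ℝ) := by
        rw [show (2:ℝ) = ((2:ℕ):ℝ) by norm_num, Real.rpow_natCast]; norm_num
      rw [this, ← Real.rpow_mul (by norm_num), show (2 : ℝ) * ((N:ℝ)/2) = (N:ℝ) by ring,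
        Real.rpow_natCast]
    rw [h14] at hlt
    rw [hc]
    linarith
  -- IVT helpers
  have helper_gt : ∀ a b : ℝ, a ≤ b → c < f N a p →
      (∀ t, a < t → t ≤ b → f N t p ≠ c) → c < f N b p := by
    intro a b hab ha hnr
    by_contra h
    push_neg at h
    have hne : f N b p ≠ c := by
      rcases eq_or_lt_of_le hab with rfl | hab'
      · exact ne_of_gt ha
      · exact hnr b hab' le_rfl
    have hcmem : c ∈ Set.Icc (f N b p) (f N a p) := ⟨h, ha.le⟩
    obtain ⟨t, ht, hft⟩ := intermediate_value_Icc' hab hcont.continuousOn hcmem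
    have hta : a < t := by
      rcases eq_or_lt_of_le ht.1 with rfl | h'
      · exact absurd hft (ne_of_gt ha)
      · exact h'
    exact hnr t hta ht.2 hft
  have helper_lt : ∀ a b : ℝ, a ≤ b → f N a p < c →
      (∀ t, a < t → t ≤ b → f N t p ≠ c) → f N b p < c := by
    intro a b hab ha hnr
    by_contra h
    push_neg at h
    have hne : f N b p ≠ c := by
      rcases eq_or_lt_of_le hab with rfl | hab'
      · exact ne_of_lt ha
      · exact hnr b hab' le_rfl
    have hcmem : c ∈ Set.Icc (f N a p) (f N b p) := ⟨ha.le, h⟩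
    obtain ⟨t, ht, hft⟩ := intermediate_value_Icc hab hcont.continuousOn hcmem
    have hta : a < t := by
      rcases eq_or_lt_of_le ht.1 with rfl | h'
      · exact absurd hft (ne_of_lt ha)
      · exact h'
    exact hnr t hta ht.2 hft
  -- basic facts
  have hx₁N : x₁ < (N : ℝ) := lt_trans hx hx₂
  have hx₂0 : 0 < x₂ := lt_trans hx₁ hx
  have fx₁ : f N x₁ p = c := (hroots x₁ ⟨hx₁.le, hx₁N.le⟩).2 (Or.inl rfl)
  have fx₂ : f N x₂ p = c := (hroots x₂ ⟨hx₂0.le, hx₂.le⟩).2 (Or.inr rfl)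
  -- x₁ + x₂ = N
  have hsum : x₁ + x₂ = N := by
    have hmem : (N : ℝ) - x₁ ∈ Set.Icc (0 : ℝ) (N : ℝ) := ⟨by linarith, by linarith⟩
    have hval : f N ((N : ℝ) - x₁) p = c := by rw [fsymm]; exact fx₁
    rcases (hroots _ hmem).1 hval with h | h
    · exfalso
      have hx1half : x₁ = (N : ℝ) / 2 := by linarith
      rw [hx1half] at fx₁
      linarith
    · linarith
  have hx1half : x₁ < (N : ℝ) / 2 := by linarith
  have hx2half : (N : ℝ) / 2 < x₂ := by linarith
  refine ⟨hsum, ?_⟩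
  intro k hk
  obtain ⟨hk0, hkN⟩ := hk
  rcases lt_trichotomy k x₁ with h1 | h1 | h1
  · -- k < x₁ : f k > c
    have hgt : c < f N k p := by
      apply helper_gt 0 k hk0 hf0
      intro t ht0 htk hft
      rcases (hroots t ⟨ht0.le, by linarith⟩).1 hft with h | h <;> linarith
    exact ⟨⟨fun h => absurd h (by linarith), fun h => absurd h.1 (by linarith)⟩,
      ⟨fun _ => Or.inl h1, fun _ => hgt⟩⟩
  · -- k = x₁
    subst h1
    rw [fx₁]
    exact ⟨⟨fun h => absurd h (lt_irrefl c), fun h => absurd h.1 (lt_irrefl k)⟩,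
      ⟨fun h => absurd h (lt_irrefl c), fun h => by rcases h with h | h <;> linarith⟩⟩
  · rcases lt_trichotomy k x₂ with h2 | h2 | h2
    · -- x₁ < k < x₂ : f k < c
      have hlt : f N k p < c := by
        rcases le_total ((N : ℝ) / 2) k with hh | hh
        · apply helper_lt ((N : ℝ)/2) k hh hfmid
          intro t ht1 ht2 hft
          rcases (hroots t ⟨by linarith, by linarith⟩).1 hft with h | h <;> linarith
        · have hNk : f N ((N : ℝ) - k) p < c := by
            apply helper_lt ((N : ℝ)/2) ((N : ℝ) - k) (by linarith) hfmid
            intro t ht1 ht2 hft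
            rcases (hroots t ⟨by linarith, by linarith⟩).1 hft with h | h <;> linarith
          rw [fsymm] at hNk
          exact hNk
      exact ⟨⟨fun _ => ⟨h1, h2⟩, fun _ => hlt⟩,
        ⟨fun h => absurd h (by linarith), fun h => by rcases h with h | h <;> linarith⟩⟩
    · -- k = x₂
      subst h2
      rw [fx₂]
      exact ⟨⟨fun h => absurd h (lt_irrefl c), fun h => absurd h.2 (lt_irrefl k)⟩,
        ⟨fun h => absurd h (lt_irrefl c), fun h => by rcases h with h | h <;> linarith⟩⟩
    · -- x₂ < k : f k > c
      have hgt : c < f N k p := by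
        have hNk : c < f N ((N : ℝ) - k) p := by
          apply helper_gt 0 ((N : ℝ) - k) (by linarith) hf0
          intro t ht1 ht2 hft
          rcases (hroots t ⟨ht1.le, by linarith⟩).1 hft with h | h <;> linarith
        rw [fsymm] at hNk
        exact hNk
      exact ⟨⟨fun h => absurd h (by linarith), fun h => absurd h.2 (by linarith)⟩,
        ⟨fun _ => Or.inr h2, fun _ => hgt⟩⟩
end

section
/- Let N ≥ 2 be an integer and let p ∈ (1/2, 1). Define φ(a) = (1-p)^N · a + p^N / a − 2·(1/2)^N for a > 0. Then φ has exactly two zeros in the open interval (1, (p/(1-p))^N); that is, there exist a₁, a₂ with 1 < a₁ < a₂ < (p/(1-p))^N such that for all a in (1, (p/(1-p))^N), φ(a) = 0 if and only if a = a₁ or a = a₂. -/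
set_option maxHeartbeats 800000

/-- For `N ≥ 2` and `p ∈ (1/2, 1)`, the function
`φ(a) = (1-p)^N a + p^N / a − 2 (1/2)^N` has exactly two zeros in
the open interval `(1, (p/(1-p))^N)`. -/
theorem phi_two_zeros (N : ℕ) (hN : 2 ≤ N) (p : ℝ) (hp0 : 1 / 2 < p) (hp1 : p < 1) :
    ∃ a₁ a₂ : ℝ, 1 < a₁ ∧ a₁ < a₂ ∧ a₂ < (p / (1 - p)) ^ N ∧
      ∀ a : ℝ, 1 < a → a < (p / (1 - p)) ^ N →
        ((1 - p) ^ N * a + p ^ N / a - 2 * (1 / 2 : ℝ) ^ N = 0 ↔ a = a₁ ∨ a = a₂) := by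
  set q : ℝ := 1 - p with hqdef
  have hq0 : 0 < q := by simp [hqdef]; linarith
  have hq12 : q < 1 / 2 := by simp [hqdef]; linarith
  have hp0' : (0 : ℝ) < p := by linarith
  have hqN : 0 < q ^ N := pow_pos hq0 N
  have hpN : 0 < p ^ N := pow_pos hp0' N
  set c : ℝ := (1 / 2 : ℝ) ^ N with hcdef
  have hc0 : 0 < c := pow_pos (by norm_num) N
  -- key convexity inequality : 2c < p^N + q^N
  have hkey : 2 * c < p ^ N + q ^ N := by
    have hconv := (strictConvexOn_pow hN).2 (Set.mem_Ici.mpr hq0.le)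
      (Set.mem_Ici.mpr hp0'.le) (by intro h; rw [hqdef] at h; linarith)
      (by norm_num : (0:ℝ) < 1/2) (by norm_num : (0:ℝ) < 1/2) (by norm_num)
    have h12 : (1/2 : ℝ) • q + (1/2 : ℝ) • p = 1/2 := by
      simp [hqdef]; ring
    rw [h12] at hconv
    simp only [smul_eq_mul] at hconv
    rw [hcdef]; linarith
  have hpq : p * q < 1 / 4 := by nlinarith [sq_nonneg (p - 1/2)]
  have hpq0 : 0 < p * q := mul_pos hp0' hq0
  have hD : (p * q) ^ N < c ^ 2 := by
    have hc2 : c ^ 2 = (1 / 4 : ℝ) ^ N := by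
      rw [hcdef, show (1/4 : ℝ) = (1/2)^2 by norm_num, ← pow_mul, ← pow_mul, Nat.mul_comm]
    rw [hc2]
    exact pow_lt_pow_left₀ hpq hpq0.le (by omega)
  set s : ℝ := Real.sqrt (c ^ 2 - (p * q) ^ N) with hsdef
  have hs0 : 0 < s := Real.sqrt_pos.mpr (by linarith)
  have hs2 : s ^ 2 = c ^ 2 - (p * q) ^ N := Real.sq_sqrt (by linarith)
  have hqNc : q ^ N < c := pow_lt_pow_left₀ hq12 hq0.le (by omega)
  have hcpN : c < p ^ N := pow_lt_pow_left₀ hp0 (by norm_num) (by omega)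
  have hpqN : (p * q) ^ N = p ^ N * q ^ N := mul_pow p q N
  have hs2' : s ^ 2 = c ^ 2 - p ^ N * q ^ N := by rw [hs2, hpqN]
  have hs1 : s < c - q ^ N := by
    rw [hsdef]
    apply (Real.sqrt_lt' (by linarith)).mpr
    nlinarith [hkey, hqN, hpqN]
  have hs3 : s < p ^ N - c := by
    rw [hsdef]
    apply (Real.sqrt_lt' (by linarith)).mpr
    nlinarith [hkey, hpN, hpqN]
  refine ⟨(c - s) / q ^ N, (c + s) / q ^ N, ?_, ?_, ?_, ?_⟩
  · rw [lt_div_iff₀ hqN, one_mul]; linarith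
  · rw [div_lt_div_iff₀ hqN hqN]; nlinarith
  · rw [div_pow, div_lt_div_iff₀ hqN hqN]; nlinarith
  · intro a ha1 ha2
    have ha0 : (0 : ℝ) < a := lt_trans one_pos ha1
    have ha0' : a ≠ 0 := ne_of_gt ha0
    have hqN' : q ^ N ≠ 0 := ne_of_gt hqN
    have hfac : ∀ x : ℝ, q ^ N * (q ^ N * x ^ 2 - 2 * c * x + p ^ N)
        = (q ^ N * x - (c - s)) * (q ^ N * x - (c + s)) := by
      intro x; linear_combination hs2'
    have hEq : q ^ N * a + p ^ N / a - 2 * c = (q ^ N * a ^ 2 - 2 * c * a + p ^ N) / a := by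
      field_simp; ring
    rw [hEq, div_eq_zero_iff]
    constructor
    · rintro (h | h)
      · have h2 : (q ^ N * a - (c - s)) * (q ^ N * a - (c + s)) = 0 := by
          rw [← hfac a, h, mul_zero]
        rcases mul_eq_zero.mp h2 with h3 | h3
        · left; rw [eq_div_iff hqN']; linear_combination h3
        · right; rw [eq_div_iff hqN']; linear_combination h3
      · exact absurd h ha0'
    · rintro (h | h) <;> left
      · have hA : q ^ N * a = c - s := by rw [h]; field_simp
        have h0 : q ^ N * (q ^ N * a ^ 2 - 2 * c * a + p ^ N) = 0 := by
          rw [hfac a, hA]; ring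
        exact (mul_eq_zero.mp h0).resolve_left hqN'
      · have hA : q ^ N * a = c + s := by rw [h]; field_simp
        have h0 : q ^ N * (q ^ N * a ^ 2 - 2 * c * a + p ^ N) = 0 := by
          rw [hfac a, hA]; ring
        exact (mul_eq_zero.mp h0).resolve_left hqN'
end

section
/- For every integer N ≥ 2 and every p ∈ (0,1) with p ≠ 1/2, one has H(N,p) < H(N,1/2). In other words, for fixed N ≥ 2 the average encoding efficiency H(N,p) is uniquely maximized over p ∈ (0,1) at p = 1/2. -/
open Finset

/-- Average encoding efficiency
`H N p = (1/N) ∑_{k=1}^{N-1} C(N,k) p^k (1-p)^(N-k) log₂ C(N,k)`. -/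
noncomputable def H (N : ℕ) (p : ℝ) : ℝ :=
  (1 / (N : ℝ)) * ∑ k ∈ Finset.Ico 1 N,
    (N.choose k : ℝ) * p ^ k * (1 - p) ^ (N - k) * Real.logb 2 (N.choose k)

/-!
Up to the factor `1 / N`, `H N` is the Bernstein polynomial of degree `N` of `k ↦ log₂ C(N, k)`
(the terms `k = 0, N` vanish). Its derivative is `N` times the Bernstein polynomial of degree
`N - 1` of the forward differences `g k = log₂ C(N, k + 1) - log₂ C(N, k)`, which are
antisymmetric under `k ↦ N - 1 - k` and nonnegative for `2k < N - 1` by unimodality of the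
binomial coefficients. Pairing `k` with `N - 1 - k` writes the derivative at `p < 1/2` as a sum of
the terms `g k C(N - 1, k) (p^k (1-p)^(N-1-k) - p^(N-1-k) (1-p)^k) ≥ 0`, the one for `k = 0` being
positive. So `H N` increases strictly on `[0, 1/2]`, and `H N (1 - p) = H N p` handles `p > 1/2`.
-/

open Polynomial Real

section Bernstein

variable (R : Type*) [CommRing R]

noncomputable def bernsteinSum (n : ℕ) (f : ℕ → R) : R[X] :=
  ∑ ν ∈ range (n + 1), f ν • bernsteinPolynomial R n ν

variable {R}

theorem eval_bernsteinSum (n : ℕ) (f : ℕ → R) (x : R) :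
    (bernsteinSum R n f).eval x =
      ∑ ν ∈ range (n + 1), f ν * (n.choose ν * x ^ ν * (1 - x) ^ (n - ν)) := by
  simp [bernsteinSum, eval_finsetSum, bernsteinPolynomial]

theorem bernsteinSum_comp_one_sub (n : ℕ) (f : ℕ → R) :
    (bernsteinSum R n f).comp (1 - X) = bernsteinSum R n (fun ν => f (n - ν)) := by
  rw [bernsteinSum, Polynomial.sum_comp, bernsteinSum, ← sum_range_reflect]
  refine sum_congr rfl fun ν hν => ?_
  have hν : ν ≤ n := Nat.lt_succ_iff.mp (mem_range.mp hν)
  rw [smul_comp, add_tsub_cancel_right, bernsteinPolynomial.flip _ _ _ (n.sub_le ν),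
    Nat.sub_sub_self hν]

theorem derivative_bernsteinSum_succ (n : ℕ) (f : ℕ → R) :
    derivative (bernsteinSum R (n + 1) f) =
      (n + 1 : R[X]) * bernsteinSum R n (fun ν => f (ν + 1) - f ν) := by
  have hshift : ∑ ν ∈ range (n + 1), f (ν + 1) • bernsteinPolynomial R n (ν + 1) +
      f 0 • bernsteinPolynomial R n 0 = ∑ ν ∈ range (n + 1), f ν • bernsteinPolynomial R n ν := by
    rw [← sum_range_succ' (fun ν => f ν • bernsteinPolynomial R n ν), sum_range_succ,
      bernsteinPolynomial.eq_zero_of_lt R n.lt_succ_self, smul_zero, add_zero]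
  simp only [bernsteinSum, derivative_sum, derivative_smul]
  rw [sum_range_succ', bernsteinPolynomial.derivative_zero]
  simp only [bernsteinPolynomial.derivative_succ_aux, ← mul_smul_comm, smul_sub, sub_smul,
    ← mul_sum, sum_sub_distrib, Nat.add_sub_cancel, Nat.cast_succ]
  linear_combination -(n + 1 : R[X]) * hshift

end Bernstein

theorem pow_sub_mul_pow_le_pow_mul_pow_sub {α : Type*} [CommSemiring α] [PartialOrder α]
    [IsOrderedRing α] {p q : α} (hp : 0 ≤ p) (hpq : p ≤ q) {n k : ℕ} (hk : 2 * k ≤ n) :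
    p ^ (n - k) * q ^ k ≤ p ^ k * q ^ (n - k) := by
  obtain ⟨m, rfl⟩ := Nat.exists_eq_add_of_le hk
  have hsub : 2 * k + m - k = k + m := by omega
  rw [hsub, pow_add, pow_add, mul_right_comm, mul_assoc (p ^ k)]
  exact mul_le_mul_of_nonneg_left (mul_le_mul_of_nonneg_left (pow_le_pow_left₀ hp hpq m)
    (pow_nonneg (hp.trans hpq) k)) (pow_nonneg hp k)

theorem eval_bernsteinSum_pos {n : ℕ} (hn : n ≠ 0) {g : ℕ → ℝ}
    (hanti : ∀ k ≤ n, g (n - k) = -g k) (hnonneg : ∀ k, 2 * k < n → 0 ≤ g k) (hg0 : 0 < g 0)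
    {p : ℝ} (hp0 : 0 ≤ p) (hp : p < 1 / 2) : 0 < (bernsteinSum ℝ n g).eval p := by
  set q := 1 - p with hq
  have hpq : p < q := by linarith
  have hflip : (bernsteinSum ℝ n g).eval q = -(bernsteinSum ℝ n g).eval p := by
    rw [show q = (1 - X : ℝ[X]).eval p by simp [hq], ← eval_comp, bernsteinSum_comp_one_sub,
      eval_bernsteinSum, eval_bernsteinSum, ← sum_neg_distrib]
    refine sum_congr rfl fun k hk => ?_
    rw [hanti k (Nat.lt_succ_iff.mp (mem_range.mp hk)), neg_mul]
  have hdiff : (bernsteinSum ℝ n g).eval p - (bernsteinSum ℝ n g).eval q =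
      ∑ k ∈ range (n + 1), g k * n.choose k * (p ^ k * q ^ (n - k) - p ^ (n - k) * q ^ k) := by
    rw [eval_bernsteinSum, eval_bernsteinSum, ← sum_sub_distrib, hq, sub_sub_cancel]
    refine sum_congr rfl fun k _ => by ring
  have hterm : ∀ k ∈ range (n + 1),
      0 ≤ g k * n.choose k * (p ^ k * q ^ (n - k) - p ^ (n - k) * q ^ k) := by
    intro k hk
    have hkn : k ≤ n := Nat.lt_succ_iff.mp (mem_range.mp hk)
    rcases lt_trichotomy (2 * k) n with hlt | heq | hgt
    · exact mul_nonneg (mul_nonneg (hnonneg k hlt) (Nat.cast_nonneg _))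
        (sub_nonneg.mpr (pow_sub_mul_pow_le_pow_mul_pow_sub hp0 hpq.le hlt.le))
    · simp [show n - k = k by omega]
    · have hgk : g k ≤ 0 := neg_nonneg.mp (hanti k hkn ▸ hnonneg (n - k) (by omega))
      have := pow_sub_mul_pow_le_pow_mul_pow_sub hp0 hpq.le (show 2 * (n - k) ≤ n by omega)
      rw [Nat.sub_sub_self hkn] at this
      exact mul_nonneg_of_nonpos_of_nonpos (mul_nonpos_of_nonpos_of_nonneg hgk (Nat.cast_nonneg _))
        (sub_nonpos.mpr this)
  have hpos : 0 < ∑ k ∈ range (n + 1),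
      g k * n.choose k * (p ^ k * q ^ (n - k) - p ^ (n - k) * q ^ k) := by
    refine sum_pos' hterm ⟨0, by simp, ?_⟩
    simpa using mul_pos hg0 (sub_pos.mpr (pow_lt_pow_left₀ hpq hp0 hn))
  linarith

theorem logb_choose_le_logb_choose_succ {n k : ℕ} (hk : 2 * k < n) :
    logb 2 ((n + 1).choose k) ≤ logb 2 ((n + 1).choose (k + 1)) :=
  logb_le_logb_of_le one_lt_two (by exact_mod_cast Nat.choose_pos (by omega))
    (by exact_mod_cast Nat.choose_le_succ_of_lt_half_left (by omega))

theorem H_eq_eval_bernsteinSum (N : ℕ) (p : ℝ) :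
    H N p = (1 / (N : ℝ)) * (bernsteinSum ℝ N fun k => logb 2 (N.choose k)).eval p := by
  rw [H, eval_bernsteinSum]
  congr 1
  have hsub : Ico 1 N ⊆ range (N + 1) := fun k hk => by
    rw [mem_Ico] at hk; rw [mem_range]; omega
  rw [← sum_subset hsub]
  · exact sum_congr rfl fun k _ => by ring
  · intro k hk hk'
    obtain rfl | rfl : k = 0 ∨ k = N := by simp at hk hk'; omega
    all_goals simp

theorem H_one_sub (N : ℕ) (p : ℝ) : H N (1 - p) = H N p := by
  rw [H_eq_eval_bernsteinSum, H_eq_eval_bernsteinSum, show 1 - p = (1 - X : ℝ[X]).eval p by simp,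
    ← eval_comp, bernsteinSum_comp_one_sub, eval_bernsteinSum, eval_bernsteinSum]
  congr 1
  refine sum_congr rfl fun k hk => ?_
  rw [Nat.choose_symm (Nat.lt_succ_iff.mp (mem_range.mp hk))]

theorem hasDerivAt_H (n : ℕ) (p : ℝ) :
    HasDerivAt (H (n + 1)) ((bernsteinSum ℝ n fun k =>
      logb 2 ((n + 1).choose (k + 1)) - logb 2 ((n + 1).choose k)).eval p) p := by
  have h := ((bernsteinSum ℝ (n + 1) fun k => logb 2 ((n + 1).choose k)).hasDerivAt p).const_mul
    (1 / ((n + 1 : ℕ) : ℝ))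
  rw [derivative_bernsteinSum_succ, eval_mul, ← funext (H_eq_eval_bernsteinSum (n + 1))] at h
  refine h.congr_deriv ?_
  simp only [eval_add, eval_natCast, eval_one, Nat.cast_succ]
  field_simp

theorem H_strictMonoOn {N : ℕ} (hN : 2 ≤ N) : StrictMonoOn (H N) (Set.Icc 0 (1 / 2)) := by
  obtain ⟨n, rfl⟩ := Nat.exists_eq_add_of_le' (one_le_two.trans hN)
  refine strictMonoOn_of_deriv_pos (convex_Icc _ _)
    (fun p _ => (hasDerivAt_H n p).continuousAt.continuousWithinAt) fun p hp => ?_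
  rw [interior_Icc] at hp
  rw [(hasDerivAt_H n p).deriv]
  refine eval_bernsteinSum_pos (by omega) (fun k hk => ?_) (fun k hk => ?_) ?_ hp.1.le hp.2
  · rw [show n - k + 1 = n + 1 - k by omega, show n - k = n + 1 - (k + 1) by omega,
      Nat.choose_symm (by omega), Nat.choose_symm (by omega), neg_sub]
  · exact sub_nonneg.mpr (logb_choose_le_logb_choose_succ hk)
  · have : (1 : ℝ) < n + 1 := by exact_mod_cast hN
    simpa using logb_pos one_lt_two this

/-- For every integer `N ≥ 2` and every `p ∈ (0,1)` with `p ≠ 1/2`,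
`H(N,p) < H(N,1/2)`: the average encoding efficiency is uniquely maximized at `p = 1/2`. -/
theorem H_lt_H_half (N : ℕ) (hN : 2 ≤ N) (p : ℝ) (hp0 : 0 < p) (hp1 : p < 1)
    (hp : p ≠ 1 / 2) : H N p < H N (1 / 2) := by
  have hhalf : (1 / 2 : ℝ) ∈ Set.Icc 0 (1 / 2) := by norm_num
  rcases hp.lt_or_gt with hlt | hgt
  · exact H_strictMonoOn hN ⟨hp0.le, hlt.le⟩ hhalf hlt
  · rw [← H_one_sub]
    exact H_strictMonoOn hN ⟨by linarith, by linarith⟩ hhalf (by linarith)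
end

section
/- For every fixed p ∈ (0,1), the sequence H(N,p) converges as N → ∞ to the binary Shannon entropy S(p); that is, lim_{N→∞} H(N,p) = S(p). -/
/-!
With `K ~ Binomial(N, p)`, `N · H(N, p) = E[log₂ C(N, K)]`. Taking `log₂` of the binomial
probabilities and using `E[K] = N p` gives `E[log₂ C(N, K)] = N · S(p) - Ent(K)`, and the
entropy of a distribution on `N + 1` points lies between `0` and `log₂ (N + 1)`, so
`H(N, p) = S(p) + O(log N / N)`.
-/

open Finset Filter

/-- Binary Shannon entropy `S(p) = −p log₂ p − (1−p) log₂ (1−p)`. -/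
noncomputable def S (p : ℝ) : ℝ :=
  -(p * Real.logb 2 p) - (1 - p) * Real.logb 2 (1 - p)

open Real Polynomial

lemma Real.sum_negMulLog_nonneg {ι : Type*} {s : Finset ι} {q : ι → ℝ}
    (hq : ∀ i ∈ s, 0 ≤ q i) (hsum : ∑ i ∈ s, q i = 1) :
    0 ≤ ∑ i ∈ s, negMulLog (q i) :=
  sum_nonneg fun i hi => negMulLog_nonneg (hq i hi) (hsum ▸ single_le_sum hq hi)

lemma Real.sum_negMulLog_le_log_card {ι : Type*} {s : Finset ι} {q : ι → ℝ}
    (hq : ∀ i ∈ s, 0 < q i) (hsum : ∑ i ∈ s, q i = 1) :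
    ∑ i ∈ s, negMulLog (q i) ≤ log s.card := by
  have jensen := strictConcaveOn_log_Ioi.concaveOn.le_map_sum (t := s) (p := fun i => (q i)⁻¹)
    (fun i hi => (hq i hi).le) hsum fun i hi => inv_pos.mpr (hq i hi)
  have hcard : ∑ i ∈ s, q i * (q i)⁻¹ = s.card := by
    rw [card_eq_sum_ones, Nat.cast_sum, Nat.cast_one]
    exact sum_congr rfl fun i hi => mul_inv_cancel₀ (hq i hi).ne'
  simp only [smul_eq_mul, hcard, log_inv] at jensen
  simpa [negMulLog] using jensen

noncomputable def binomialWeight (N k : ℕ) (p : ℝ) : ℝ :=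
  N.choose k * p ^ k * (1 - p) ^ (N - k)

lemma binomialWeight_eq_eval_bernsteinPolynomial (N k : ℕ) (p : ℝ) :
    binomialWeight N k p = (bernsteinPolynomial ℝ N k).eval p := by
  simp [binomialWeight, bernsteinPolynomial]

lemma sum_binomialWeight (N : ℕ) (p : ℝ) :
    ∑ k ∈ range (N + 1), binomialWeight N k p = 1 := by
  simpa [binomialWeight_eq_eval_bernsteinPolynomial, eval_finsetSum] using
    congrArg (eval p) (bernsteinPolynomial.sum ℝ N)

lemma sum_mul_binomialWeight (N : ℕ) (p : ℝ) :
    ∑ k ∈ range (N + 1), k * binomialWeight N k p = N * p := by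
  simpa [binomialWeight_eq_eval_bernsteinPolynomial, eval_finsetSum] using
    congrArg (eval p) (bernsteinPolynomial.sum_smul ℝ N)

lemma binomialWeight_pos {N k : ℕ} {p : ℝ} (hp0 : 0 < p) (hp1 : p < 1) (hk : k ≤ N) :
    0 < binomialWeight N k p := by
  have := Nat.choose_pos hk
  have : 0 < 1 - p := by linarith
  unfold binomialWeight
  positivity

lemma log_binomialWeight {N k : ℕ} {p : ℝ} (hp0 : 0 < p) (hp1 : p < 1) (hk : k ≤ N) :
    log (binomialWeight N k p) = log (N.choose k) + k * log p + (N - k : ℕ) * log (1 - p) := by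
  have := Nat.choose_pos hk
  have : 0 < 1 - p := by linarith
  rw [binomialWeight, log_mul (by positivity) (by positivity),
    log_mul (by positivity) (by positivity), log_pow, log_pow]

noncomputable def binomialEntropy (N : ℕ) (p : ℝ) : ℝ :=
  ∑ k ∈ range (N + 1), negMulLog (binomialWeight N k p)

lemma binomialEntropy_nonneg (N : ℕ) {p : ℝ} (hp0 : 0 < p) (hp1 : p < 1) :
    0 ≤ binomialEntropy N p :=
  sum_negMulLog_nonneg (fun _ hk => (binomialWeight_pos hp0 hp1 (mem_range_succ_iff.mp hk)).le)
    (sum_binomialWeight N p)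

lemma binomialEntropy_le_log_add_one (N : ℕ) {p : ℝ} (hp0 : 0 < p) (hp1 : p < 1) :
    binomialEntropy N p ≤ log (N + 1) := by
  simpa [binomialEntropy] using sum_negMulLog_le_log_card (fun _ hk => binomialWeight_pos hp0 hp1
    (mem_range_succ_iff.mp hk)) (sum_binomialWeight N p)

lemma sum_binomialWeight_mul_log_choose (N : ℕ) {p : ℝ} (hp0 : 0 < p) (hp1 : p < 1) :
    ∑ k ∈ range (N + 1), binomialWeight N k p * log (N.choose k) =
      N * binEntropy p - binomialEntropy N p := by
  calc ∑ k ∈ range (N + 1), binomialWeight N k p * log (N.choose k)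
      = ∑ k ∈ range (N + 1), (-negMulLog (binomialWeight N k p) -
          log p * (k * binomialWeight N k p) -
          log (1 - p) * (N * binomialWeight N k p - k * binomialWeight N k p)) := by
        refine sum_congr rfl fun k hk => ?_
        have hk : k ≤ N := mem_range_succ_iff.mp hk
        rw [negMulLog, log_binomialWeight hp0 hp1 hk, Nat.cast_sub hk]
        ring
    _ = -binomialEntropy N p - log p * (N * p) - log (1 - p) * (N - N * p) := by
        simp only [binomialEntropy, sum_sub_distrib, ← mul_sum, sum_neg_distrib,
          sum_binomialWeight, sum_mul_binomialWeight, mul_one]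
    _ = N * binEntropy p - binomialEntropy N p := by
        rw [binEntropy_eq_negMulLog_add_negMulLog_one_sub, negMulLog, negMulLog]
        ring

lemma S_eq_binEntropy_div_log_two (p : ℝ) : S p = binEntropy p / log 2 := by
  rw [S, binEntropy_eq_negMulLog_add_negMulLog_one_sub, negMulLog, negMulLog, logb, logb]
  ring

lemma H_eq_S_sub_binomialEntropy {N : ℕ} (hN : N ≠ 0) {p : ℝ} (hp0 : 0 < p) (hp1 : p < 1) :
    H N p = S p - binomialEntropy N p / N / log 2 := by
  have hext : ∑ k ∈ Ico 1 N, (N.choose k : ℝ) * p ^ k * (1 - p) ^ (N - k) * logb 2 (N.choose k)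
      = (∑ k ∈ range (N + 1), binomialWeight N k p * log (N.choose k)) / log 2 := by
    -- the terms `k = 0` and `k = N` vanish since `C(N, 0) = C(N, N) = 1`
    rw [sum_div, sum_range_succ, range_eq_Ico, sum_eq_sum_Ico_succ_bot (Nat.pos_of_ne_zero hN)]
    simp [binomialWeight, logb, mul_div_assoc]
  rw [H, hext, sum_binomialWeight_mul_log_choose N hp0 hp1, S_eq_binEntropy_div_log_two]
  field_simp

lemma tendsto_log_add_one_div_natCast :
    Tendsto (fun N : ℕ => log (N + 1) / N) atTop (nhds 0) := by
  have h := (tendsto_pow_log_div_mul_add_atTop 1 (-1) 1 one_ne_zero).comp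
    (tendsto_natCast_atTop_atTop.atTop_add (tendsto_const_nhds (x := (1 : ℝ))))
  simpa [Function.comp_def] using h

lemma tendsto_binomialEntropy_div_natCast {p : ℝ} (hp0 : 0 < p) (hp1 : p < 1) :
    Tendsto (fun N : ℕ => binomialEntropy N p / N) atTop (nhds 0) :=
  tendsto_of_tendsto_of_tendsto_of_le_of_le tendsto_const_nhds tendsto_log_add_one_div_natCast
    (fun N => div_nonneg (binomialEntropy_nonneg N hp0 hp1) N.cast_nonneg)
    (fun N => div_le_div_of_nonneg_right (binomialEntropy_le_log_add_one N hp0 hp1) N.cast_nonneg)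

/-- For every fixed `p ∈ (0,1)`, `H(N,p) → S(p)` as `N → ∞`. -/
theorem H_tendsto_shannon (p : ℝ) (hp0 : 0 < p) (hp1 : p < 1) :
    Tendsto (fun N : ℕ => H N p) atTop (nhds (S p)) := by
  have h := ((tendsto_binomialEntropy_div_natCast hp0 hp1).div_const (log 2)).const_sub (S p)
  rw [zero_div, sub_zero] at h
  refine h.congr' ?_
  filter_upwards [eventually_ne_atTop 0] with N hN
  exact (H_eq_S_sub_binomialEntropy hN hp0 hp1).symm
end

section
/- For every integer N ≥ 1, one has N · Σ_{k=0}^{N} C(N,k) log₂( (N+1)² / ((N+1−k)(k+1)) ) ≥ 2 · Σ_{k=0}^{N} C(N,k) log₂ C(N,k); equivalently, Σ_{k=0}^{N} C(N,k) log₂( (N+1)^{2N} / ( ((N+1−k)(k+1))^N · C(N,k)² ) ) ≥ 0. -/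
/-!
It suffices to compare the summands: `C(N,k)² ((k+1)(N+1-k))^N ≤ (N+1)^{2N}`.
By AM-GM, `4 (k+1)(N+1-k) ≤ (N+2)²`, and `C(N,k) ≤ C(N,⌊N/2⌋)`, which is smaller than `2^N`
by a factor of order `√N`. Since `(1 + 1/(N+1))^{2N} < e² < 8`, replacing `N+2` by `N+1`
costs only a bounded factor, which that `√N` absorbs once `N ≥ 5`; smaller `N` are checked
directly.
-/

open Finset

namespace Nat

theorem three_mul_add_one_mul_centralBinom_sq_le (n : ℕ) :
    (3 * n + 1) * n.centralBinom ^ 2 ≤ 16 ^ n := by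
  induction n with
  | zero => simp
  | succ n ih =>
    have hratio : (3 * n + 4) * (2 * (2 * n + 1)) ^ 2 ≤ 16 * (n + 1) ^ 2 * (3 * n + 1) := by
      nlinarith
    refine le_of_mul_le_mul_left ?_ (by positivity : 0 < (n + 1) ^ 2)
    calc (n + 1) ^ 2 * ((3 * (n + 1) + 1) * (n + 1).centralBinom ^ 2)
        = (3 * n + 4) * ((n + 1) * (n + 1).centralBinom) ^ 2 := by ring
      _ = (3 * n + 4) * (2 * (2 * n + 1)) ^ 2 * n.centralBinom ^ 2 := by
        rw [succ_mul_centralBinom_succ]; ring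
      _ ≤ 16 * (n + 1) ^ 2 * (3 * n + 1) * n.centralBinom ^ 2 := by gcongr
      _ = 16 * (n + 1) ^ 2 * ((3 * n + 1) * n.centralBinom ^ 2) := by ring
      _ ≤ 16 * (n + 1) ^ 2 * 16 ^ n := by gcongr
      _ = (n + 1) ^ 2 * 16 ^ (n + 1) := by ring

theorem three_mul_add_two_mul_choose_half_sq_le (n : ℕ) :
    (3 * n + 2) * n.choose (n / 2) ^ 2 ≤ 2 * 4 ^ n := by
  obtain ⟨m, rfl | rfl⟩ := n.even_or_odd'
  · rw [show 2 * m / 2 = m by omega, ← centralBinom_eq_two_mul_choose]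
    calc (3 * (2 * m) + 2) * m.centralBinom ^ 2
        = 2 * ((3 * m + 1) * m.centralBinom ^ 2) := by ring
      _ ≤ 2 * 16 ^ m := by gcongr; exact three_mul_add_one_mul_centralBinom_sq_le m
      _ = 2 * 4 ^ (2 * m) := by rw [pow_mul]; norm_num
  · have hdouble : (m + 1).centralBinom = 2 * (2 * m + 1).choose m := by
      rw [centralBinom_eq_two_mul_choose, show 2 * (m + 1) = 2 * m + 1 + 1 by ring,
        choose_succ_succ', choose_symm_half]
      ring
    have hcentral := three_mul_add_one_mul_centralBinom_sq_le (m + 1)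
    rw [hdouble] at hcentral
    rw [show (2 * m + 1) / 2 = m by omega]
    refine le_of_mul_le_mul_left ?_ (by norm_num : 0 < 4)
    calc 4 * ((3 * (2 * m + 1) + 2) * (2 * m + 1).choose m ^ 2)
        = (24 * m + 20) * (2 * m + 1).choose m ^ 2 := by ring
      _ ≤ (24 * m + 32) * (2 * m + 1).choose m ^ 2 := by gcongr; omega
      _ = 2 * ((3 * (m + 1) + 1) * (2 * (2 * m + 1).choose m) ^ 2) := by ring
      _ ≤ 2 * 16 ^ (m + 1) := by gcongr
      _ = 4 * (2 * 4 ^ (2 * m + 1)) := by rw [show 16 = 4 ^ 2 by norm_num, ← pow_mul]; ring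

theorem add_one_pow_le_eight_mul_pow {a e : ℕ} (he : e ≤ 2 * a) :
    (a + 1) ^ e ≤ 8 * a ^ e := by
  rcases a.eq_zero_or_pos with rfl | ha
  · simp [show e = 0 by omega]
  have ha' : (0 : ℝ) < a := by exact_mod_cast ha
  have hexp : Real.exp 2 < 8 := by
    rw [show (2 : ℝ) = 1 + 1 by norm_num, Real.exp_add]
    nlinarith [Real.exp_pos 1, Real.exp_one_lt_d9]
  have hbase : (a : ℝ) + 1 ≤ a * Real.exp (1 / a) := by
    have := Real.add_one_le_exp (1 / (a : ℝ))
    calc (a : ℝ) + 1 = a * (1 / a + 1) := by field_simp; ring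
      _ ≤ a * Real.exp (1 / a) := by gcongr
  have hexponent : (e : ℝ) / a ≤ 2 := by
    rw [div_le_iff₀ ha']; exact_mod_cast he
  suffices ((a : ℝ) + 1) ^ e ≤ 8 * (a : ℝ) ^ e by exact_mod_cast this
  calc ((a : ℝ) + 1) ^ e ≤ (a * Real.exp (1 / a)) ^ e := by gcongr
    _ = (a : ℝ) ^ e * Real.exp (e / a) := by
      rw [mul_pow, ← Real.exp_nat_mul, mul_one_div]
    _ ≤ (a : ℝ) ^ e * 8 := by
      gcongr
      exact (Real.exp_le_exp.mpr hexponent).trans hexp.le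
    _ = 8 * (a : ℝ) ^ e := mul_comm _ _

theorem two_mul_add_two_pow_le (n : ℕ) :
    2 * (n + 2) ^ (2 * n) ≤ (3 * n + 2) * (n + 1) ^ (2 * n) := by
  rcases lt_or_ge n 5 with hn | hn
  · interval_cases n <;> norm_num
  calc 2 * (n + 2) ^ (2 * n) ≤ 2 * (8 * (n + 1) ^ (2 * n)) := by
        gcongr; exact add_one_pow_le_eight_mul_pow (by omega)
    _ ≤ (3 * n + 2) * (n + 1) ^ (2 * n) := by
        rw [← mul_assoc]; gcongr; omega

theorem choose_half_sq_mul_le (n : ℕ) :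
    n.choose (n / 2) ^ 2 * (n + 2) ^ (2 * n) ≤ 4 ^ n * (n + 1) ^ (2 * n) := by
  refine le_of_mul_le_mul_left ?_ (by positivity : 0 < 2 * (3 * n + 2))
  calc 2 * (3 * n + 2) * (n.choose (n / 2) ^ 2 * (n + 2) ^ (2 * n))
      = ((3 * n + 2) * n.choose (n / 2) ^ 2) * (2 * (n + 2) ^ (2 * n)) := by ring
    _ ≤ (2 * 4 ^ n) * ((3 * n + 2) * (n + 1) ^ (2 * n)) := by
      exact Nat.mul_le_mul (three_mul_add_two_mul_choose_half_sq_le n) (two_mul_add_two_pow_le n)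
    _ = 2 * (3 * n + 2) * (4 ^ n * (n + 1) ^ (2 * n)) := by ring

theorem choose_sq_mul_pow_le (n k : ℕ) :
    n.choose k ^ 2 * ((k + 1) * (n + 1 - k)) ^ n ≤ (n + 1) ^ (2 * n) := by
  have amgm : 4 * ((k + 1) * (n + 1 - k)) ≤ (n + 2) ^ 2 := by
    rcases le_or_gt k (n + 1) with hk | hk
    · obtain ⟨j, hj⟩ := Nat.exists_eq_add_of_le hk
      rw [show n + 1 - k = j by omega, show n + 2 = k + 1 + j by omega]
      zify
      nlinarith [sq_nonneg ((k : ℤ) + 1 - j)]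
    · simp [show n + 1 - k = 0 by omega]
  refine le_of_mul_le_mul_left ?_ (by positivity : 0 < 4 ^ n)
  calc 4 ^ n * (n.choose k ^ 2 * ((k + 1) * (n + 1 - k)) ^ n)
      = n.choose k ^ 2 * (4 * ((k + 1) * (n + 1 - k))) ^ n := by
        rw [mul_pow 4 ((k + 1) * (n + 1 - k)) n, mul_left_comm]
    _ ≤ n.choose (n / 2) ^ 2 * ((n + 2) ^ 2) ^ n := by
      gcongr
      exact choose_le_middle k n
    _ ≤ 4 ^ n * (n + 1) ^ (2 * n) := by
      rw [← pow_mul]; exact choose_half_sq_mul_le n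

end Nat

theorem two_mul_logb_choose_le (n k : ℕ) (hk : k ≤ n) :
    2 * Real.logb 2 (n.choose k) ≤
      n * Real.logb 2 (((n : ℝ) + 1) ^ 2 / (((n : ℝ) + 1 - k) * ((k : ℝ) + 1))) := by
  have hchoose : (0 : ℝ) < n.choose k := by exact_mod_cast Nat.choose_pos hk
  have hcast : ((n : ℝ) + 1 - k) * ((k : ℝ) + 1) = (((k + 1) * (n + 1 - k) : ℕ) : ℝ) := by
    push_cast [Nat.cast_sub (show k ≤ n + 1 by omega)]
    ring
  have hprod : (0 : ℝ) < ((k + 1) * (n + 1 - k) : ℕ) := by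
    exact_mod_cast Nat.mul_pos k.succ_pos (by omega)
  have hpow : (n.choose k : ℝ) ^ 2 ≤
      (((n : ℝ) + 1) ^ 2 / (((n : ℝ) + 1 - k) * ((k : ℝ) + 1))) ^ n := by
    rw [hcast, div_pow, ← pow_mul, le_div_iff₀ (by positivity)]
    exact_mod_cast Nat.choose_sq_mul_pow_le n k
  have hlog := Real.logb_le_logb_of_le (b := 2) (by norm_num) (by positivity) hpow
  rwa [Real.logb_pow, Real.logb_pow, Nat.cast_ofNat] at hlog

theorem key_inequality_general (N : ℕ) :
    (N : ℝ) * ∑ k ∈ Finset.range (N + 1),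
        (N.choose k : ℝ) *
          Real.logb 2 (((N : ℝ) + 1) ^ 2 / ((((N : ℝ) + 1) - (k : ℝ)) * ((k : ℝ) + 1)))
      ≥ 2 * ∑ k ∈ Finset.range (N + 1),
          (N.choose k : ℝ) * Real.logb 2 (N.choose k) := by
  rw [ge_iff_le, mul_sum, mul_sum]
  refine sum_le_sum fun k hk => ?_
  have hkN : k ≤ N := Nat.lt_succ_iff.mp (mem_range.mp hk)
  calc 2 * ((N.choose k : ℝ) * Real.logb 2 (N.choose k))
      = (N.choose k : ℝ) * (2 * Real.logb 2 (N.choose k)) := by ring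
    _ ≤ (N.choose k : ℝ) * (N * Real.logb 2
          (((N : ℝ) + 1) ^ 2 / (((N : ℝ) + 1 - k) * ((k : ℝ) + 1)))) :=
      mul_le_mul_of_nonneg_left (two_mul_logb_choose_le N k hkN) (Nat.cast_nonneg _)
    _ = N * ((N.choose k : ℝ) * Real.logb 2
          (((N : ℝ) + 1) ^ 2 / (((N : ℝ) + 1 - k) * ((k : ℝ) + 1)))) := by ring

/-- For every integer `N ≥ 1`,
`N ∑_{k=0}^{N} C(N,k) log₂((N+1)²/((N+1−k)(k+1))) ≥ 2 ∑_{k=0}^{N} C(N,k) log₂ C(N,k)`. -/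
theorem key_inequality (N : ℕ) (hN : 1 ≤ N) :
    (N : ℝ) * ∑ k ∈ Finset.range (N + 1),
        (N.choose k : ℝ) *
          Real.logb 2 (((N : ℝ) + 1) ^ 2 / ((((N : ℝ) + 1) - (k : ℝ)) * ((k : ℝ) + 1)))
      ≥ 2 * ∑ k ∈ Finset.range (N + 1),
          (N.choose k : ℝ) * Real.logb 2 (N.choose k) :=
  key_inequality_general N
end

section
/- For every integer N ≥ 1, one has ( (2N+2)/(N+2) )^N ≥ C(N, ⌊N/2⌋), the central binomial coefficient of N. -/
/-!
Write `(2N+2)/(N+2) = 2 / (1 + 1/(N+1))`. Since `(1 + 1/(N+1))^N ≤ e`, the left-hand side is at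
least `2^N / e`. The ratio `C(N, ⌊N/2⌋) / 2^N` is non-increasing by Pascal's rule and equals
`10/32 < 1/e` at `N = 5`; the cases `N < 5` are checked directly.
-/

namespace Nat

theorem succ_choose_le_two_mul_choose_half (n j : ℕ) :
    (n + 1).choose j ≤ 2 * n.choose (n / 2) := by
  cases j with
  | zero =>
    have := choose_pos (div_le_self n 2)
    rw [choose_zero_right]
    omega
  | succ k =>
    rw [choose_succ_succ']
    have := choose_le_middle k n
    have := choose_le_middle (k + 1) n
    omega

theorem choose_half_mul_exp_one_le_two_pow {n : ℕ} (hn : 5 ≤ n) :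
    (n.choose (n / 2) : ℝ) * Real.exp 1 ≤ 2 ^ n := by
  induction n, hn using Nat.le_induction with
  | base =>
    have := Real.exp_one_lt_d9
    norm_num [Nat.choose]
    linarith
  | succ n _ ih =>
    have hstep : ((n + 1).choose ((n + 1) / 2) : ℝ) ≤ 2 * n.choose (n / 2) := by
      exact_mod_cast succ_choose_le_two_mul_choose_half n _
    calc ((n + 1).choose ((n + 1) / 2) : ℝ) * Real.exp 1
        ≤ 2 * ((n.choose (n / 2) : ℝ) * Real.exp 1) := by
          nlinarith [Real.exp_pos 1]
      _ ≤ 2 ^ (n + 1) := by rw [pow_succ]; linarith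

end Nat

theorem Real.one_add_inv_succ_pow_le_exp_one (n : ℕ) :
    (1 + ((n : ℝ) + 1)⁻¹) ^ n ≤ Real.exp 1 :=
  calc (1 + ((n : ℝ) + 1)⁻¹) ^ n ≤ (1 + ((n : ℝ) + 1)⁻¹) ^ (n + 1) :=
        pow_le_pow_right₀ (le_add_of_nonneg_right (by positivity)) n.le_succ
    _ ≤ Real.exp 1 := by exact_mod_cast Real.one_add_inv_pow_le_exp (n := n + 1)

theorem central_binom_bound_general (N : ℕ) :
    ((2 * (N : ℝ) + 2) / ((N : ℝ) + 2)) ^ N ≥ (N.choose (N / 2) : ℝ) := by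
  rcases lt_or_ge N 5 with hsmall | hlarge
  · interval_cases N <;> norm_num [Nat.choose]
  have hbase : (2 * (N : ℝ) + 2) / ((N : ℝ) + 2) = 2 / (1 + ((N : ℝ) + 1)⁻¹) := by
    field_simp
    ring
  rw [ge_iff_le, hbase, div_pow, le_div_iff₀ (by positivity)]
  calc (N.choose (N / 2) : ℝ) * (1 + ((N : ℝ) + 1)⁻¹) ^ N
      ≤ N.choose (N / 2) * Real.exp 1 := by
        gcongr
        exact Real.one_add_inv_succ_pow_le_exp_one N
    _ ≤ 2 ^ N := Nat.choose_half_mul_exp_one_le_two_pow hlarge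

/-- For every integer `N ≥ 1`, `((2N+2)/(N+2))^N ≥ C(N, ⌊N/2⌋)`. -/
theorem central_binom_bound (N : ℕ) (hN : 1 ≤ N) :
    ((2 * (N : ℝ) + 2) / ((N : ℝ) + 2)) ^ N ≥ (N.choose (N / 2) : ℝ) :=
  central_binom_bound_general N
end

section
/- For every integer k ≥ 2, one has ( k(k+1) / ( ⌊(k+1)/2⌋ · (k+1 − ⌊(k+1)/2⌋) ) ) · ( 2k/(k+1) )^{k−1} ≤ ( (2k+4)/(k+3) )^{k+1}. -/
/-- For every integer `k ≥ 2`,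
`(k(k+1) / (⌊(k+1)/2⌋ (k+1−⌊(k+1)/2⌋))) (2k/(k+1))^(k−1) ≤ ((2k+4)/(k+3))^(k+1)`. -/
theorem induction_step_bound (k : ℕ) (hk : 2 ≤ k) :
    ((k : ℝ) * ((k : ℝ) + 1)) /
        ((((k + 1) / 2 : ℕ) : ℝ) * (((k + 1 - (k + 1) / 2 : ℕ) : ℝ))) *
        ((2 * (k : ℝ)) / ((k : ℝ) + 1)) ^ (k - 1)
      ≤ ((2 * (k : ℝ) + 4) / ((k : ℝ) + 3)) ^ (k + 1) := by
  have hkR : (2:ℝ) ≤ (k:ℝ) := by exact_mod_cast hk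
  have hkpos : (0:ℝ) < (k:ℝ) := by linarith
  set x : ℝ := (2 * (k : ℝ)) / ((k : ℝ) + 1) with hx
  set y : ℝ := (2 * (k : ℝ) + 4) / ((k : ℝ) + 3) with hy
  have hxpos : 0 < x := by rw [hx]; positivity
  have hypos : 0 < y := by rw [hy]; positivity
  set t : ℝ := 2 / ((k:ℝ)^2 + 3*(k:ℝ)) with ht
  have htpos : 0 < t := by rw [ht]; positivity
  have hxy : y = x * (1 + t) := by
    rw [hx, hy, ht]
    field_simp
    ring
  -- floor product bound in ℕ
  have hnat : k*(k+2) ≤ 4 * ((k+1)/2) * (k+1 - (k+1)/2) := by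
    rcases Nat.even_or_odd k with ⟨m, hm⟩ | ⟨m, hm⟩
    · have h1 : (k+1)/2 = m := by omega
      have h2 : k+1 - (k+1)/2 = m+1 := by omega
      rw [h2, h1]; nlinarith
    · have h1 : (k+1)/2 = m+1 := by omega
      have h2 : k+1 - (k+1)/2 = m+1 := by omega
      rw [h2, h1]; nlinarith
  have habR : (k:ℝ)*((k:ℝ)+2) ≤
      4 * (((k + 1) / 2 : ℕ) : ℝ) * (((k + 1 - (k + 1) / 2 : ℕ) : ℝ)) := by
    exact_mod_cast hnat
  have hapos : (0:ℝ) < (((k + 1) / 2 : ℕ) : ℝ) := by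
    have h : 1 ≤ (k+1)/2 := by omega
    exact_mod_cast Nat.lt_of_lt_of_le Nat.zero_lt_one h
  have hbpos : (0:ℝ) < (((k + 1 - (k + 1) / 2 : ℕ) : ℕ) : ℝ) := by
    have h : 1 ≤ k+1 - (k+1)/2 := by omega
    exact_mod_cast Nat.lt_of_lt_of_le Nat.zero_lt_one h
  -- step 1: the rational prefactor is at most 4(k+1)/(k+2)
  have h1 : ((k : ℝ) * ((k : ℝ) + 1)) /
        ((((k + 1) / 2 : ℕ) : ℝ) * (((k + 1 - (k + 1) / 2 : ℕ) : ℝ)))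
      ≤ 4*((k:ℝ)+1)/((k:ℝ)+2) := by
    rw [div_le_div_iff₀ (by positivity) (by positivity)]
    nlinarith [habR, mul_pos hapos hbpos]
  -- Bernoulli
  have hcast : ((k - 1 : ℕ) : ℝ) = (k:ℝ) - 1 := by
    have h : 1 ≤ k := by omega
    push_cast [Nat.cast_sub h]
    ring
  have hbern : 1 + ((k:ℝ) - 1) * t ≤ (1 + t) ^ (k - 1) := by
    have h := one_add_mul_le_pow (a := t) (by linarith) (k - 1)
    rwa [hcast] at h
  -- coefficient inequality
  have hc : 4*((k:ℝ)+1)/((k:ℝ)+2) ≤ y^2 * (1 + ((k:ℝ)-1)*t) := by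
    have hy2 : y^2 * (1 + ((k:ℝ)-1)*t)
        = (4*((k:ℝ)+2)^2*((k:ℝ)^2+5*(k:ℝ)-2)) / (((k:ℝ)+3)^2*((k:ℝ)^2+3*(k:ℝ))) := by
      rw [hy, ht]
      field_simp
      ring
    rw [hy2, div_le_div_iff₀ (by positivity) (by positivity)]
    nlinarith [sq_nonneg ((k:ℝ)-2), sq_nonneg (k:ℝ), pow_pos hkpos 3, pow_pos hkpos 4,
      mul_nonneg (mul_nonneg hkpos.le hkpos.le) hkpos.le]
  -- power decomposition
  have hpow : y^(k+1) = y^2 * ((1+t)^(k-1) * x^(k-1)) := by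
    have h2 : k + 1 = 2 + (k-1) := by omega
    rw [h2, pow_add]
    congr 1
    rw [hxy, mul_pow, mul_comm]
  calc ((k : ℝ) * ((k : ℝ) + 1)) /
        ((((k + 1) / 2 : ℕ) : ℝ) * (((k + 1 - (k + 1) / 2 : ℕ) : ℝ))) * x ^ (k - 1)
      ≤ (4*((k:ℝ)+1)/((k:ℝ)+2)) * x ^ (k-1) :=
        mul_le_mul_of_nonneg_right h1 (by positivity)
    _ ≤ (y^2 * (1 + ((k:ℝ)-1)*t)) * x ^ (k-1) :=
        mul_le_mul_of_nonneg_right hc (by positivity)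
    _ ≤ y^2 * ((1+t)^(k-1) * x^(k-1)) := by
        rw [← mul_assoc]
        exact mul_le_mul_of_nonneg_right
          (mul_le_mul_of_nonneg_left hbern (by positivity)) (by positivity)
    _ = y^(k+1) := hpow.symm
end

section
/- For every integer k ≥ 2, one has ( (k²+3k)/(k²+3k+2) )^{k−1} ≤ (k+2)³ / ( (k+1)(k+3)² ). -/
/-! Writing the base as `1 - t` with `t = 2 / ((k+1)(k+2))`, Bernoulli's inequality applied to
`(1 + t)^(k-1)` together with `(1 - t)(1 + t) ≤ 1` gives `(1 - t)^(k-1) ≤ 1 / (1 + (k-1) t)`,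
which equals `(k+1)(k+2) / (k(k+5))`. For `k ≥ 3` this is below the right-hand side, since
`k(k+5)(k+2)² - (k+1)²(k+3)² = (k-2)(k²+4k) + 4k - 9`; the case `k = 2` is checked directly. -/

lemma one_sub_pow_mul_one_add_mul_le_one (n : ℕ) {t : ℝ} (ht₀ : -1 ≤ t) (ht₁ : t ≤ 1) :
    (1 - t) ^ n * (1 + n * t) ≤ 1 := by
  calc (1 - t) ^ n * (1 + n * t) ≤ (1 - t) ^ n * (1 + t) ^ n :=
        mul_le_mul_of_nonneg_left (one_add_mul_le_pow (by linarith) n) (pow_nonneg (by linarith) n)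
    _ = (1 - t ^ 2) ^ n := by rw [← mul_pow]; ring
    _ ≤ 1 := pow_le_one₀ (by nlinarith) (by nlinarith)

lemma ratio_pow_le_of_one_le (k : ℕ) (hk : 1 ≤ k) :
    (((k : ℝ) ^ 2 + 3 * k) / ((k : ℝ) ^ 2 + 3 * k + 2)) ^ (k - 1)
      ≤ ((k : ℝ) + 1) * (k + 2) / (k * (k + 5)) := by
  set t : ℝ := 2 / ((k + 1) * (k + 2)) with ht
  have hprod : (0 : ℝ) < (k + 1) * (k + 2) := by positivity
  have hbase : ((k : ℝ) ^ 2 + 3 * k) / ((k : ℝ) ^ 2 + 3 * k + 2) = 1 - t := by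
    rw [ht]; field_simp; ring
  have hdenom : 1 + ((k - 1 : ℕ) : ℝ) * t = k * (k + 5) / ((k + 1) * (k + 2)) := by
    rw [Nat.cast_sub hk, ht]; field_simp; ring
  have hbound := one_sub_pow_mul_one_add_mul_le_one (k - 1) (t := t)
    (by rw [ht]; linarith [div_nonneg zero_le_two hprod.le])
    (by rw [ht, div_le_one hprod]; nlinarith)
  rw [hdenom, ← mul_div_assoc, div_le_one hprod] at hbound
  rw [hbase, le_div_iff₀ (by positivity)]
  linarith

lemma add_one_mul_add_two_div_le_of_three_le (x : ℝ) (hx : 3 ≤ x) :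
    (x + 1) * (x + 2) / (x * (x + 5)) ≤ (x + 2) ^ 3 / ((x + 1) * (x + 3) ^ 2) := by
  rw [div_le_div_iff₀ (by positivity) (by positivity)]
  have hgap : 0 ≤ (x - 2) * (x ^ 2 + 4 * x) + 4 * x - 9 := by nlinarith
  nlinarith

/-- For every integer `k ≥ 2`,
`((k²+3k)/(k²+3k+2))^(k−1) ≤ (k+2)³ / ((k+1)(k+3)²)`. -/
theorem ratio_pow_bound (k : ℕ) (hk : 2 ≤ k) :
    (((k : ℝ) ^ 2 + 3 * (k : ℝ)) / ((k : ℝ) ^ 2 + 3 * (k : ℝ) + 2)) ^ (k - 1)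
      ≤ ((k : ℝ) + 2) ^ 3 / (((k : ℝ) + 1) * ((k : ℝ) + 3) ^ 2) := by
  obtain rfl | hk3 := hk.eq_or_lt
  · norm_num
  · exact (ratio_pow_le_of_one_le k (by omega)).trans
      (add_one_mul_add_two_div_le_of_three_le k (by exact_mod_cast hk3))
end
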